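/- Let f ∈ k_∞ − k and 0 < ε < 1. Then ζ_{f,ε}(q−1) ≠ 0 and |ζ_{f,ε}(q²−1)| = |ζ_{f,ε}(q−1)|^{q+1}; that is, the quotient ζ_{f,ε}(q²−1)/ζ_{f,ε}(q−1)^{q+1} has absolute value 1. -/

import Mathlib

open scoped Classical
open Filter Topology
set_option linter.unusedSectionVars false

noncomputable section

namespace QuantumJ

variable (Fq : Type) [Field Fq] [Fintype Fq]

/-- `k_∞ = 𝔽_q((1/T))`, modeled as the field of Laurent series in `X = 1/T`. -/
abbrev Kinf := LaurentSeries Fq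

/-- The element `T = X⁻¹` of `k_∞`. -/
def Tinf : Kinf Fq := HahnSeries.single (-1 : ℤ) (1 : Fq)

/-- The absolute value `|f| = q^{deg_T f} = q^{-ord_X f}`. -/
def av (x : Kinf Fq) : ℝ :=
  if x = 0 then 0 else (Fintype.card Fq : ℝ) ^ (-(HahnSeries.order x))

/-- The inclusion of `A = 𝔽_q[T]` into `k_∞`. -/
def toK (a : Polynomial Fq) : Kinf Fq := Polynomial.aeval (Tinf Fq) a

/-- Membership in `k = 𝔽_q(T) ⊂ k_∞`. -/
def IsRational (x : Kinf Fq) : Prop :=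
  ∃ a b : Polynomial Fq, b ≠ 0 ∧ toK Fq b * x = toK Fq a

/-- `‖x‖ = min_{a ∈ A} |x - a|`, the distance from `x` to the nearest polynomial in `T`. -/
def dA (x : Kinf Fq) : ℝ :=
  sInf {r : ℝ | ∃ a : Polynomial Fq, r = av Fq (x - toK Fq a)}

/-- `Λ_ε(f) = {λ ∈ A : ‖λ f‖ < ε}`, viewed inside `A = 𝔽_q[T]`. -/
def Lam (f : Kinf Fq) (ε : ℝ) : Set (Polynomial Fq) :=
  {l | dA Fq (toK Fq l * f) < ε}

/-- The `ε`-zeta function `ζ_{f,ε}(n) = Σ_{0 ≠ λ ∈ Λ_ε(f) monic} λ^{-n}`. -/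
def zetaE (f : Kinf Fq) (ε : ℝ) (n : ℕ) : Kinf Fq :=
  ∑' l : {l : Polynomial Fq // l ∈ Lam Fq f ε ∧ l.Monic}, ((toK Fq l.1)⁻¹) ^ n

/-- The zeta function of `A`: `ζ_A(n) = Σ_{a monic} a^{-n}`. -/
def zetaA (n : ℕ) : Kinf Fq :=
  ∑' a : {a : Polynomial Fq // a.Monic}, ((toK Fq a.1)⁻¹) ^ n

/-- `Δ_ε(f) = -(T^{q²} - T) ζ_{f,ε}(q²-1) + (T^q - T)^q ζ_{f,ε}(q-1)^{q+1}`. -/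
def DeltaE (f : Kinf Fq) (ε : ℝ) : Kinf Fq :=
  -((Tinf Fq) ^ ((Fintype.card Fq) ^ 2) - Tinf Fq) * zetaE Fq f ε ((Fintype.card Fq) ^ 2 - 1)
    + ((Tinf Fq) ^ (Fintype.card Fq) - Tinf Fq) ^ (Fintype.card Fq)
        * (zetaE Fq f ε (Fintype.card Fq - 1)) ^ (Fintype.card Fq + 1)

/-- `g_ε(f) = -(T^q - T) ζ_{f,ε}(q-1)`. -/
def gE (f : Kinf Fq) (ε : ℝ) : Kinf Fq :=
  -((Tinf Fq) ^ (Fintype.card Fq) - Tinf Fq) * zetaE Fq f ε (Fintype.card Fq - 1)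

/-- The `ε`-modular invariant `j_ε(f) = g_ε(f)^{q+1}/Δ_ε(f) ∈ k_∞ ∪ {∞}`,
with `j_ε(f) = ∞` when `Δ_ε(f) = 0`. -/
def jE (f : Kinf Fq) (ε : ℝ) : OnePoint (Kinf Fq) :=
  if DeltaE Fq f ε = 0 then OnePoint.infty
  else ((gE Fq f ε ^ (Fintype.card Fq + 1) / DeltaE Fq f ε : Kinf Fq) : OnePoint (Kinf Fq))

/-- The quantum modular invariant `j^qt(f)`: the set of limit points in `k_∞ ∪ {∞}`
of `j_{ε_i}(f)` along sequences `ε_i → 0`, `ε_i > 0`. -/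
def jqt (f : Kinf Fq) : Set (OnePoint (Kinf Fq)) :=
  {ξ | ∃ e : ℕ → ℝ, (∀ i, 0 < e i) ∧ Tendsto e atTop (𝓝 0) ∧
    Tendsto (fun i => jE Fq f (e i)) atTop (𝓝 ξ)}

lemma one_lt_q : 1 < Fintype.card Fq := Fintype.one_lt_card

lemma cardR_pos : (0:ℝ) < (Fintype.card Fq : ℝ) := by
  exact_mod_cast Fintype.card_pos

lemma one_lt_cardR : (1:ℝ) < (Fintype.card Fq : ℝ) := by
  exact_mod_cast one_lt_q Fq

lemma Tinf_pow (i : ℕ) : (Tinf Fq) ^ i = HahnSeries.single (-(i:ℤ)) (1 : Fq) := by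
  induction i with
  | zero => rw [pow_zero, ← HahnSeries.single_zero_one]; norm_num
  | succ k ih => rw [pow_succ, ih, Tinf, HahnSeries.single_mul_single]; push_cast; ring_nf

lemma algebraMap_single (c : Fq) : algebraMap Fq (Kinf Fq) c = HahnSeries.single 0 c := by
  simp [HahnSeries.algebraMap_apply', PowerSeries.algebraMap_apply, HahnSeries.ofPowerSeries_C,
    HahnSeries.C_apply]

lemma coeff_toK (l : Polynomial Fq) (n : ℤ) :
    (toK Fq l).coeff n = if n ≤ 0 then l.coeff (-n).toNat else 0 := by
  induction l using Polynomial.induction_on' with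
  | add p q hp hq =>
      rw [toK, map_add, HahnSeries.coeff_add, ← toK, ← toK, hp, hq, Polynomial.coeff_add]
      split <;> simp
  | monomial i c =>
      rw [toK, Polynomial.aeval_monomial, Tinf_pow, algebraMap_single,
        HahnSeries.single_mul_single, zero_add, mul_one, HahnSeries.coeff_single,
        Polynomial.coeff_monomial]
      split_ifs <;> first | rfl | omega

lemma toK_ne_zero {l : Polynomial Fq} (hl : l ≠ 0) : toK Fq l ≠ 0 := by
  intro h
  have h2 := coeff_toK Fq l (-(l.natDegree : ℤ))
  rw [h, HahnSeries.coeff_zero, if_pos (by omega)] at h2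
  simp only [neg_neg, Int.toNat_natCast] at h2
  exact Polynomial.leadingCoeff_ne_zero.mpr hl h2.symm

lemma order_toK {l : Polynomial Fq} (hl : l ≠ 0) :
    (toK Fq l).order = -(l.natDegree : ℤ) := by
  refine le_antisymm (HahnSeries.order_le_of_coeff_ne_zero ?_) ?_
  · rw [coeff_toK, if_pos (by omega)]
    simp only [neg_neg, Int.toNat_natCast]
    exact Polynomial.leadingCoeff_ne_zero.mpr hl
  · by_contra hlt
    push_neg at hlt
    have hne := mt HahnSeries.coeff_order_eq_zero.mp (toK_ne_zero Fq hl)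
    rw [coeff_toK, if_pos (by omega)] at hne
    exact hne (Polynomial.coeff_eq_zero_of_natDegree_lt (by omega))

lemma av_zero : av Fq 0 = 0 := if_pos rfl

lemma av_nonneg (x : Kinf Fq) : 0 ≤ av Fq x := by
  unfold av; split
  · exact le_refl 0
  · exact (zpow_pos (cardR_pos Fq) _).le

lemma av_pos {x : Kinf Fq} (hx : x ≠ 0) : 0 < av Fq x := by
  unfold av; rw [if_neg hx]; exact zpow_pos (cardR_pos Fq) _

lemma av_ne_zero {x : Kinf Fq} (hx : x ≠ 0) : av Fq x ≠ 0 := (av_pos Fq hx).ne'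

lemma av_mul (x y : Kinf Fq) : av Fq (x * y) = av Fq x * av Fq y := by
  by_cases hx : x = 0
  · simp [av, hx]
  by_cases hy : y = 0
  · simp [av, hy]
  have hxy : x * y ≠ 0 := mul_ne_zero hx hy
  unfold av
  rw [if_neg hxy, if_neg hx, if_neg hy, HahnSeries.order_mul hx hy, neg_add,
    zpow_add₀ (cardR_pos Fq).ne']

lemma av_one : av Fq 1 = 1 := by
  unfold av; rw [if_neg one_ne_zero, HahnSeries.order_one]; norm_num

lemma av_inv (x : Kinf Fq) : av Fq x⁻¹ = (av Fq x)⁻¹ := by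
  by_cases hx : x = 0
  · simp [av, hx]
  have h := av_mul Fq x x⁻¹
  rw [mul_inv_cancel₀ hx, av_one] at h
  field_simp [av_ne_zero Fq hx] at h ⊢
  linarith [h]

lemma av_pow (x : Kinf Fq) (n : ℕ) : av Fq (x ^ n) = av Fq x ^ n := by
  induction n with
  | zero => simp [av_one]
  | succ k ih => rw [pow_succ, av_mul, ih, pow_succ]

lemma av_div (x y : Kinf Fq) : av Fq (x / y) = av Fq x / av Fq y := by
  rw [div_eq_mul_inv, av_mul, av_inv, div_eq_mul_inv]

lemma av_neg (x : Kinf Fq) : av Fq (-x) = av Fq x := by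
  unfold av
  rw [neg_eq_zero, HahnSeries.order_neg]

lemma av_add_le (x y : Kinf Fq) : av Fq (x + y) ≤ max (av Fq x) (av Fq y) := by
  by_cases hxy : x + y = 0
  · rw [hxy, av_zero]; exact le_max_of_le_left (av_nonneg Fq x)
  by_cases hx : x = 0
  · simp [hx]
  by_cases hy : y = 0
  · simp [hy]
  have hmin := HahnSeries.min_order_le_order_add hxy
  unfold av
  rw [if_neg hxy, if_neg hx, if_neg hy]
  rcases le_total x.order y.order with h | h
  · refine le_max_of_le_left (zpow_le_zpow_right₀ (one_lt_cardR Fq).le ?_)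
    omega
  · refine le_max_of_le_right (zpow_le_zpow_right₀ (one_lt_cardR Fq).le ?_)
    omega

lemma av_add_of_lt {x y : Kinf Fq} (h : av Fq y < av Fq x) : av Fq (x + y) = av Fq x := by
  refine le_antisymm (le_trans (av_add_le Fq x y) (by rw [max_eq_left h.le])) ?_
  by_contra hc
  push_neg at hc
  have h2 : av Fq x ≤ max (av Fq (x + y)) (av Fq y) := by
    have h3 := av_add_le Fq (x + y) (-y)
    rw [add_neg_cancel_right, av_neg] at h3
    exact h3
  rcases max_cases (av Fq (x + y)) (av Fq y) with ⟨he, _⟩ | ⟨he, _⟩ <;> rw [he] at h2 <;> linarith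

/-- The additive subgroup of Laurent series with coefficients vanishing below `D`. -/

def cball (D : ℤ) : AddSubgroup (Kinf Fq) where
  carrier := {x | ∀ n, n < D → x.coeff n = 0}
  add_mem' := by
    intro x y hx hy n hn
    rw [HahnSeries.coeff_add, hx n hn, hy n hn, add_zero]
  zero_mem' := fun n _ => HahnSeries.coeff_zero
  neg_mem' := by
    intro x hx n hn
    rw [HahnSeries.coeff_neg, hx n hn, neg_zero]

lemma mem_cball {x : Kinf Fq} {D : ℤ} : x ∈ cball Fq D ↔ ∀ n, n < D → x.coeff n = 0 :=
  Iff.rfl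

lemma mem_cball_of_le_order {x : Kinf Fq} {D : ℤ} (h : x = 0 ∨ D ≤ x.order) :
    x ∈ cball Fq D := by
  rcases h with rfl | h
  · exact (cball Fq D).zero_mem
  · intro n hn
    exact HahnSeries.coeff_eq_zero_of_lt_order (lt_of_lt_of_le hn h)

lemma le_order_of_mem_cball {x : Kinf Fq} {D : ℤ} (hx : x ≠ 0) (h : x ∈ cball Fq D) :
    D ≤ x.order := by
  by_contra hc
  push_neg at hc
  exact mt HahnSeries.coeff_order_eq_zero.mp hx (h _ hc)

lemma isClosed_cball (D : ℤ) : IsClosed ((cball Fq D : Set (Kinf Fq))) := by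
  refine isClosed_of_closure_subset ?_
  intro x hx
  rw [SetLike.mem_coe, mem_cball]
  intro n hn
  set a : Kinf Fq := HahnSeries.single D (1 : Fq) with ha
  have ha0 : Valued.v a ≠ 0 := by
    rw [ha, LaurentSeries.valuation_single_zpow (K := Fq) D]; exact WithZero.exp_ne_zero
  have ha0' : Valued.v.restrict a ≠ 0 := fun h0 => ha0 (by
    rw [← Valuation.embedding_restrict, h0, map_zero])
  set γ := Units.mk0 (Valued.v.restrict a) ha0' with hγ
  have hnb : {y : Kinf Fq | Valued.v.restrict (y - x) < (γ : _)} ∈ 𝓝 x :=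
    Valued.mem_nhds.mpr ⟨γ, subset_rfl⟩
  obtain ⟨y, hy1, hy2⟩ := mem_closure_iff_nhds.mp hx _ hnb
  have hy2' : ∀ m, m < D → y.coeff m = 0 := hy2
  have hval : Valued.v (y - x) ≤ ((Multiplicative.ofAdd (-D) : Multiplicative ℤ) : WithZero (Multiplicative ℤ)) := by
    have h3 : Valued.v.restrict (y - x) < Valued.v.restrict a := hy1
    have h4 := (Valued.v.restrict_lt_iff_lt_embedding).mp h3
    rw [Valuation.embedding_restrict] at h4
    rw [ha, LaurentSeries.valuation_single_zpow (K := Fq) D] at h4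
    exact le_of_lt h4
  have hc := LaurentSeries.coeff_zero_of_lt_valuation Fq hval hn
  rw [HahnSeries.coeff_sub, hy2' n hn, zero_sub, neg_eq_zero] at hc
  exact hc

lemma tsum_mem_cball {ι : Type} (t : ι → Kinf Fq) (D : ℤ) (h : ∀ i, t i ∈ cball Fq D) :
    (∑' i, t i) ∈ cball Fq D := by
  by_cases hs : Summable t
  · have ht : Filter.Tendsto (fun s : Finset ι => ∑ i ∈ s, t i) Filter.atTop (𝓝 (∑' i, t i)) :=
      hs.hasSum
    refine (isClosed_cball Fq D).mem_of_tendsto ht ?_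
    exact Filter.Eventually.of_forall fun s => AddSubgroup.sum_mem _ fun i _ => h i
  · rw [tsum_eq_zero_of_not_summable hs]
    exact (cball Fq D).zero_mem

lemma av_le_of_mem_cball {x : Kinf Fq} {D : ℤ} (h : x ∈ cball Fq D) :
    av Fq x ≤ (Fintype.card Fq : ℝ) ^ (-D) := by
  by_cases hx : x = 0
  · rw [hx, av_zero]
    exact (zpow_pos (cardR_pos Fq) _).le
  have hD := le_order_of_mem_cball Fq hx h
  unfold av
  rw [if_neg hx]
  exact zpow_le_zpow_right₀ (one_lt_cardR Fq).le (by omega)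

lemma order_toK_inv_pow {l : Polynomial Fq} (hl : l ≠ 0) (n : ℕ) :
    ((toK Fq l)⁻¹ ^ n).order = (n : ℤ) * l.natDegree := by
  have h0 := toK_ne_zero Fq hl
  have hinv : (toK Fq l)⁻¹ ≠ 0 := inv_ne_zero h0
  have horder : ((toK Fq l)⁻¹).order = (l.natDegree : ℤ) := by
    have hm := HahnSeries.order_mul h0 hinv
    rw [mul_inv_cancel₀ h0, HahnSeries.order_one, order_toK Fq hl] at hm
    omega
  rw [HahnSeries.order_pow, horder]
  simp [zsmul_eq_mul]

instance : NonarchimedeanAddGroup (Kinf Fq) := by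
  constructor
  intro U hU
  obtain ⟨γ, hγ⟩ := Valued.mem_nhds_zero.mp hU
  have hopen : IsOpen ((Valued.v.restrict.ltAddSubgroup γ : AddSubgroup (Kinf Fq)) : Set (Kinf Fq)) := by
    refine AddSubgroup.isOpen_of_mem_nhds _ (g := 0) ?_
    exact Valued.mem_nhds_zero.mpr ⟨γ, fun x hx => hx⟩
  exact ⟨⟨Valued.v.restrict.ltAddSubgroup γ, hopen⟩, hγ⟩

lemma val_le_of_mem_cball {x : Kinf Fq} {D : ℤ} (h : x ∈ cball Fq D) :
    Valued.v x ≤ ((Multiplicative.ofAdd (-D) : Multiplicative ℤ) : WithZero (Multiplicative ℤ)) :=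
  (LaurentSeries.valuation_le_iff_coeff_lt_eq_zero Fq).mpr h

lemma finite_deg_lt (m : ℕ) : {p : Polynomial Fq | p.natDegree < m}.Finite := by
  apply Set.Finite.subset (Set.finite_range
    (fun c : Fin m → Fq => ∑ i : Fin m, Polynomial.C (c i) * Polynomial.X ^ (i : ℕ)))
  intro p hp
  refine ⟨fun i => p.coeff i, ?_⟩
  simp only
  rw [Fin.sum_univ_eq_sum_range (fun i => (Polynomial.C (p.coeff i) * Polynomial.X ^ i : Polynomial Fq)) m]
  conv_rhs => rw [Polynomial.as_sum_range' p m hp]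
  exact Finset.sum_congr rfl fun i _ => Polynomial.C_mul_X_pow_eq_monomial

lemma summable_aux (P : Polynomial Fq → Prop) (h0 : ∀ l, P l → l ≠ 0) (n : ℕ) (hn : 1 ≤ n) :
    Summable (fun l : {l : Polynomial Fq // P l} => ((toK Fq l.1)⁻¹) ^ n) := by
  apply NonarchimedeanAddGroup.summable_of_tendsto_cofinite_zero
  intro s hs
  rw [Filter.mem_map, Filter.mem_cofinite]
  obtain ⟨γ, hγ⟩ := Valued.mem_nhds_zero.mp hs
  obtain ⟨g, hg⟩ := WithZero.ne_zero_iff_exists.mp (show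
    MonoidWithZeroHom.ValueGroup₀.embedding γ.1 ≠ 0 from
    fun h0 => γ.ne_zero (MonoidWithZeroHom.ValueGroup₀.embedding_strictMono.injective
      (by rw [h0, map_zero])))
  set m : ℕ := (-(Multiplicative.toAdd g) + 1).toNat with hm
  have hsub : {l : {l : Polynomial Fq // P l} | l.1.natDegree < m} ⊇
      ({l : {l : Polynomial Fq // P l} | ((toK Fq l.1)⁻¹) ^ n ∈ s})ᶜ := by
    intro l hl
    by_contra hdeg
    rw [Set.mem_setOf_eq, not_lt] at hdeg
    rw [Set.mem_compl_iff, Set.mem_setOf_eq] at hl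
    apply hl
    apply hγ
    rw [Set.mem_setOf_eq]
    rw [Valuation.restrict_lt_iff_lt_embedding]
    have hne := h0 l.1 l.2
    have hmem : ((toK Fq l.1)⁻¹) ^ n ∈ cball Fq ((n : ℤ) * l.1.natDegree) :=
      mem_cball_of_le_order Fq (Or.inr (le_of_eq (order_toK_inv_pow Fq hne n).symm))
    have hv := val_le_of_mem_cball Fq hmem
    refine lt_of_le_of_lt hv ?_
    rw [← hg]
    rw [WithZero.coe_lt_coe]
    rw [← Multiplicative.toAdd_lt, toAdd_ofAdd]
    have h1 : (m : ℤ) ≤ (n : ℤ) * l.1.natDegree := by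
      have : (m : ℤ) ≤ (l.1.natDegree : ℤ) := by exact_mod_cast hdeg
      nlinarith [this, Int.natCast_nonneg l.1.natDegree]
    omega
  apply Set.Finite.subset _ hsub
  have := (finite_deg_lt Fq m).preimage
    (Set.injOn_of_injective (Subtype.val_injective (p := P)))
  exact this

lemma toK_add (p q : Polynomial Fq) : toK Fq (p + q) = toK Fq p + toK Fq q := map_add _ _ _

lemma toK_sub (p q : Polynomial Fq) : toK Fq (p - q) = toK Fq p - toK Fq q := map_sub _ _ _

lemma toK_mul (p q : Polynomial Fq) : toK Fq (p * q) = toK Fq p * toK Fq q := map_mul _ _ _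

lemma toK_zero : toK Fq 0 = 0 := map_zero _

lemma toK_C (c : Fq) : toK Fq (Polynomial.C c) = HahnSeries.single 0 c := by
  rw [toK, Polynomial.aeval_C, algebraMap_single]

lemma av_toK_C {c : Fq} (hc : c ≠ 0) : av Fq (toK Fq (Polynomial.C c)) = 1 := by
  rw [toK_C]
  unfold av
  rw [if_neg (HahnSeries.single_ne_zero hc), HahnSeries.order_single hc]
  norm_num

lemma dA_lt_iff {x : Kinf Fq} {ε : ℝ} :
    dA Fq x < ε ↔ ∃ a : Polynomial Fq, av Fq (x - toK Fq a) < ε := by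
  have hne : {r : ℝ | ∃ a : Polynomial Fq, r = av Fq (x - toK Fq a)}.Nonempty :=
    ⟨av Fq (x - toK Fq 0), 0, rfl⟩
  have hbdd : BddBelow {r : ℝ | ∃ a : Polynomial Fq, r = av Fq (x - toK Fq a)} :=
    ⟨0, fun r ⟨a, ha⟩ => ha ▸ av_nonneg Fq _⟩
  rw [dA, csInf_lt_iff hbdd hne]
  constructor
  · rintro ⟨r, ⟨a, rfl⟩, hr⟩
    exact ⟨a, hr⟩
  · rintro ⟨a, ha⟩
    exact ⟨_, ⟨a, rfl⟩, ha⟩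

lemma Lam_add {f : Kinf Fq} {ε : ℝ} {l1 l2 : Polynomial Fq}
    (h1 : l1 ∈ Lam Fq f ε) (h2 : l2 ∈ Lam Fq f ε) : l1 + l2 ∈ Lam Fq f ε := by
  rw [Lam, Set.mem_setOf_eq, dA_lt_iff] at h1 h2 ⊢
  obtain ⟨a1, ha1⟩ := h1
  obtain ⟨a2, ha2⟩ := h2
  refine ⟨a1 + a2, ?_⟩
  have heq : toK Fq (l1 + l2) * f - toK Fq (a1 + a2)
      = (toK Fq l1 * f - toK Fq a1) + (toK Fq l2 * f - toK Fq a2) := by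
    rw [toK_add, toK_add]; ring
  rw [heq]
  exact lt_of_le_of_lt (av_add_le Fq _ _) (max_lt ha1 ha2)

lemma Lam_smul (c : Fq) {f : Kinf Fq} {ε : ℝ} (hε : 0 < ε) {l : Polynomial Fq}
    (h : l ∈ Lam Fq f ε) : Polynomial.C c * l ∈ Lam Fq f ε := by
  rw [Lam, Set.mem_setOf_eq, dA_lt_iff] at h ⊢
  by_cases hc : c = 0
  · refine ⟨0, ?_⟩
    rw [hc]
    simp only [map_zero, zero_mul, toK_zero, sub_zero]
    rw [av_zero]
    exact hε
  obtain ⟨a, ha⟩ := h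
  refine ⟨Polynomial.C c * a, ?_⟩
  have heq : toK Fq (Polynomial.C c * l) * f - toK Fq (Polynomial.C c * a)
      = toK Fq (Polynomial.C c) * (toK Fq l * f - toK Fq a) := by
    rw [toK_mul, toK_mul]; ring
  rw [heq, av_mul, av_toK_C Fq hc, one_mul]
  exact ha

lemma Lam_neg {f : Kinf Fq} {ε : ℝ} (hε : 0 < ε) {l : Polynomial Fq}
    (h : l ∈ Lam Fq f ε) : -l ∈ Lam Fq f ε := by
  have := Lam_smul Fq (-1) hε h
  rwa [map_neg, map_one, neg_one_mul] at this

lemma coeff_sumC {m : ℕ} (c : Fin m → Fq) (j : ℕ) :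
    (∑ i : Fin m, Polynomial.C (c i) * Polynomial.X ^ (i : ℕ)).coeff j
      = if h : j < m then c ⟨j, h⟩ else 0 := by
  rw [Polynomial.finset_sum_coeff]
  simp only [Polynomial.coeff_C_mul, Polynomial.coeff_X_pow, mul_ite, mul_one, mul_zero]
  by_cases h : j < m
  · rw [dif_pos h, Finset.sum_eq_single (⟨j, h⟩ : Fin m)]
    · rw [if_pos rfl]
    · intro i _ hne
      rw [if_neg]
      intro hji
      exact hne (Fin.ext (by simp only [Fin.val_mk]; omega))
    · intro habs
      exact absurd (Finset.mem_univ _) habs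
  · rw [dif_neg h]
    refine Finset.sum_eq_zero fun i _ => ?_
    rw [if_neg]
    intro hji
    exact h (hji ▸ i.isLt)

lemma exists_polyPart (x : Kinf Fq) :
    ∃ a : Polynomial Fq, ∀ n : ℤ, n ≤ 0 → (x - toK Fq a).coeff n = 0 := by
  by_cases hx : x = 0
  · refine ⟨0, fun n _ => ?_⟩
    rw [hx, toK_zero, sub_zero, HahnSeries.coeff_zero]
  set N : ℕ := (-(x.order)).toNat with hN
  refine ⟨∑ i : Fin (N + 1), Polynomial.C (x.coeff (-(i : ℕ) : ℤ)) * Polynomial.X ^ (i : ℕ),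
    fun n hn => ?_⟩
  rw [HahnSeries.coeff_sub, coeff_toK, if_pos hn, coeff_sumC]
  by_cases h : (-n).toNat < N + 1
  · rw [dif_pos h]
    have heq : (-(((-n).toNat : ℕ)) : ℤ) = n := by omega
    rw [heq, sub_self]
  · rw [dif_neg h]
    have horder : n < x.order := by
      rcases le_or_gt x.order 0 with h1 | h1 <;> omega
    rw [HahnSeries.coeff_eq_zero_of_lt_order horder, sub_zero]

lemma exists_nonzero_lam (f : Kinf Fq) {ε : ℝ} (hε : 0 < ε) :
    ∃ l : Polynomial Fq, l ≠ 0 ∧ l ∈ Lam Fq f ε := by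
  -- choose m with q^{-m} < ε
  obtain ⟨m, hm⟩ : ∃ m : ℕ, ((Fintype.card Fq : ℝ))⁻¹ ^ m < ε := by
    refine exists_pow_lt_of_lt_one hε ?_
    rw [inv_lt_one_iff₀]
    right; exact one_lt_cardR Fq
  have hqm : ((Fintype.card Fq : ℝ)) ^ (-(m : ℤ)) < ε := by
    rwa [zpow_neg, ← inv_zpow, zpow_natCast]
  -- pigeonhole
  set pc : (Fin (m + 1) → Fq) → Polynomial Fq :=
    fun c => ∑ i : Fin (m + 1), Polynomial.C (c i) * Polynomial.X ^ (i : ℕ) with hpc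
  set F : (Fin (m + 1) → Fq) → (Fin m → Fq) :=
    fun c j => (toK Fq (pc c) * f).coeff ((j : ℕ) + 1 : ℤ) with hF
  have hcard : Fintype.card (Fin m → Fq) < Fintype.card (Fin (m + 1) → Fq) := by
    simp only [Fintype.card_pi, Finset.prod_const, Finset.card_univ, Fintype.card_fin]
    exact Nat.pow_lt_pow_right (one_lt_q Fq) (by omega)
  obtain ⟨c, c', hne, hFeq⟩ := Fintype.exists_ne_map_eq_of_card_lt F hcard
  set l : Polynomial Fq := pc c - pc c' with hl
  have hlcoeff : ∀ j : ℕ, l.coeff j = (if h : j < m + 1 then c ⟨j, h⟩ - c' ⟨j, h⟩ else 0) := by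
    intro j
    rw [hl, Polynomial.coeff_sub, hpc]
    simp only
    rw [coeff_sumC, coeff_sumC]
    split <;> simp
  have hlne : l ≠ 0 := by
    intro h0
    apply hne
    funext i
    have := hlcoeff i
    rw [h0, Polynomial.coeff_zero, dif_pos i.isLt] at this
    have := this.symm
    rw [sub_eq_zero] at this
    simpa using this
  refine ⟨l, hlne, ?_⟩
  rw [Lam, Set.mem_setOf_eq, dA_lt_iff]
  set x : Kinf Fq := toK Fq l * f with hx
  have hxcoeff : ∀ n : ℤ, 1 ≤ n → n ≤ m → x.coeff n = 0 := by
    intro n h1 h2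
    have hj : (n.toNat - 1) < m := by omega
    have := congrFun hFeq ⟨n.toNat - 1, hj⟩
    rw [hF] at this
    simp only at this
    have hn' : ((n.toNat - 1 : ℕ) : ℤ) + 1 = n := by omega
    rw [hn'] at this
    rw [hx, hl, toK_sub, sub_mul, HahnSeries.coeff_sub, this, sub_self]
  obtain ⟨a, ha⟩ := exists_polyPart Fq x
  refine ⟨a, ?_⟩
  have hmem : x - toK Fq a ∈ cball Fq ((m : ℤ) + 1) := by
    intro n hn
    rcases le_or_gt n 0 with h0 | h0
    · exact ha n h0
    · rw [HahnSeries.coeff_sub, hxcoeff n (by omega) (by omega), coeff_toK, if_neg (by omega),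
        sub_zero]
  refine lt_of_le_of_lt (av_le_of_mem_cball Fq hmem) (lt_of_le_of_lt ?_ hqm)
  exact zpow_le_zpow_right₀ (one_lt_cardR Fq).le (by omega)

lemma exists_minimal_monic (f : Kinf Fq) {ε : ℝ} (hε : 0 < ε) :
    ∃ μ : Polynomial Fq, μ ∈ Lam Fq f ε ∧ μ.Monic ∧
      ∀ l, l ∈ Lam Fq f ε → l.Monic → l ≠ μ → μ.natDegree + 1 ≤ l.natDegree := by
  obtain ⟨l0, hl0ne, hl0⟩ := exists_nonzero_lam Fq f hε
  set S : Set ℕ := {n | ∃ l, l ∈ Lam Fq f ε ∧ l ≠ 0 ∧ l.natDegree = n} with hS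
  have hSne : S.Nonempty := ⟨l0.natDegree, l0, hl0, hl0ne, rfl⟩
  obtain ⟨l1, hl1, hl1ne, hl1d⟩ := Nat.sInf_mem hSne
  set d := sInf S with hd
  have hlc : l1.leadingCoeff ≠ 0 := Polynomial.leadingCoeff_ne_zero.mpr hl1ne
  have hcne : (l1.leadingCoeff)⁻¹ ≠ 0 := inv_ne_zero hlc
  set μ : Polynomial Fq := Polynomial.C (l1.leadingCoeff)⁻¹ * l1 with hμ
  have hμmem : μ ∈ Lam Fq f ε := Lam_smul Fq _ hε hl1
  have hμmonic : μ.Monic := by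
    rw [Polynomial.Monic, hμ, Polynomial.leadingCoeff_mul, Polynomial.leadingCoeff_C,
      inv_mul_cancel₀ hlc]
  have hμd : μ.natDegree = d := by
    rw [hμ, Polynomial.natDegree_C_mul hcne, hl1d]
  have hμne : μ ≠ 0 := hμmonic.ne_zero
  have hmin : ∀ l, l ∈ Lam Fq f ε → l ≠ 0 → d ≤ l.natDegree := by
    intro l h hne2
    exact Nat.sInf_le ⟨l, h, hne2, rfl⟩
  refine ⟨μ, hμmem, hμmonic, ?_⟩
  intro l hl hlm hlμ
  by_contra hcon
  push_neg at hcon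
  have h1 : d ≤ l.natDegree := hmin l hl hlm.ne_zero
  have h2 : l.natDegree = d := by omega
  have hsub_ne : l - μ ≠ 0 := sub_ne_zero.mpr hlμ
  have hsubmem : l - μ ∈ Lam Fq f ε := by
    rw [sub_eq_add_neg]
    exact Lam_add Fq hl (Lam_neg Fq hε hμmem)
  have h3 : d ≤ (l - μ).natDegree := hmin _ hsubmem hsub_ne
  have hdeg : (l - μ).degree < l.degree := by
    refine Polynomial.degree_sub_lt ?_ hlm.ne_zero ?_
    · rw [Polynomial.degree_eq_natDegree hlm.ne_zero, Polynomial.degree_eq_natDegree hμne, h2, hμd]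
    · rw [hlm.leadingCoeff, hμmonic.leadingCoeff]
  have h4 : (l - μ).natDegree < l.natDegree := Polynomial.natDegree_lt_natDegree hsub_ne hdeg
  omega

lemma av_zetaE (f : Kinf Fq) {ε : ℝ} (hε : 0 < ε) (μ : Polynomial Fq)
    (hμ : μ ∈ Lam Fq f ε) (hmonic : μ.Monic)
    (hmin : ∀ l, l ∈ Lam Fq f ε → l.Monic → l ≠ μ → μ.natDegree + 1 ≤ l.natDegree)
    (n : ℕ) (hn : 1 ≤ n) :
    av Fq (zetaE Fq f ε n) = (Fintype.card Fq : ℝ) ^ (-((n : ℤ) * μ.natDegree)) := by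
  set d := μ.natDegree with hd
  set t : {l : Polynomial Fq // l ∈ Lam Fq f ε ∧ l.Monic} → Kinf Fq :=
    fun l => ((toK Fq l.1)⁻¹) ^ n with ht
  have hsum : Summable t :=
    summable_aux Fq _ (fun l hl => hl.2.ne_zero) n hn
  set i0 : {l : Polynomial Fq // l ∈ Lam Fq f ε ∧ l.Monic} := ⟨μ, hμ, hmonic⟩ with hi0
  have hsplit := Summable.tsum_eq_add_tsum_ite hsum i0
  rw [zetaE, ← ht, hsplit]
  set r : Kinf Fq := ∑' l, if l = i0 then 0 else t l with hr
  have hrmem : r ∈ cball Fq ((n : ℤ) * (d + 1)) := by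
    refine tsum_mem_cball Fq _ _ fun i => ?_
    by_cases hii : i = i0
    · rw [if_pos hii]; exact (cball Fq _).zero_mem
    · rw [if_neg hii]
      have hne : i.1 ≠ 0 := i.2.2.ne_zero
      have hle : d + 1 ≤ i.1.natDegree := by
        apply hmin i.1 i.2.1 i.2.2
        intro hiμ
        exact hii (Subtype.ext hiμ)
      refine mem_cball_of_le_order Fq (Or.inr ?_)
      rw [ht]
      simp only
      rw [order_toK_inv_pow Fq hne n]
      have : ((d : ℤ) + 1) ≤ (i.1.natDegree : ℤ) := by exact_mod_cast hle
      nlinarith [Int.natCast_nonneg i.1.natDegree, this, (by exact_mod_cast hn : (1:ℤ) ≤ (n:ℤ))]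
  have hrle : av Fq r ≤ (Fintype.card Fq : ℝ) ^ (-((n : ℤ) * (d + 1))) :=
    av_le_of_mem_cball Fq hrmem
  have ht0ne : t i0 ≠ 0 := by
    rw [ht]
    exact pow_ne_zero _ (inv_ne_zero (toK_ne_zero Fq hmonic.ne_zero))
  have ht0 : av Fq (t i0) = (Fintype.card Fq : ℝ) ^ (-((n : ℤ) * d)) := by
    rw [ht]
    unfold av
    rw [if_neg ht0ne]
    rw [show ((toK Fq (i0 : {l : Polynomial Fq // l ∈ Lam Fq f ε ∧ l.Monic}).1)⁻¹ ^ n).order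
      = (n : ℤ) * d from order_toK_inv_pow Fq hmonic.ne_zero n]
  have hlt : av Fq r < av Fq (t i0) := by
    rw [ht0]
    refine lt_of_le_of_lt hrle ?_
    apply zpow_lt_zpow_right₀ (one_lt_cardR Fq)
    have : (1 : ℤ) ≤ (n : ℤ) := by exact_mod_cast hn
    nlinarith [Int.natCast_nonneg d]
  rw [av_add_of_lt Fq hlt, ht0]

/-- for irrational `f` and `0 < ε < 1`, `ζ_{f,ε}(q−1) ≠ 0`,
`|ζ_{f,ε}(q²−1)| = |ζ_{f,ε}(q−1)|^{q+1}`, i.e. the quotient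
`ζ_{f,ε}(q²−1)/ζ_{f,ε}(q−1)^{q+1}` has absolute value `1`. -/
theorem abs_zeta_quotient (f : Kinf Fq) (hf : ¬ IsRational Fq f)
    (ε : ℝ) (hε0 : 0 < ε) (hε1 : ε < 1) :
    zetaE Fq f ε (Fintype.card Fq - 1) ≠ 0 ∧
    av Fq (zetaE Fq f ε ((Fintype.card Fq) ^ 2 - 1))
      = av Fq (zetaE Fq f ε (Fintype.card Fq - 1)) ^ (Fintype.card Fq + 1) ∧
    av Fq (zetaE Fq f ε ((Fintype.card Fq) ^ 2 - 1) /
        (zetaE Fq f ε (Fintype.card Fq - 1)) ^ (Fintype.card Fq + 1)) = 1 := by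
  obtain ⟨μ, hμ, hmonic, hmin⟩ := exists_minimal_monic Fq f hε0
  set q := Fintype.card Fq with hq
  have hq2 : 2 ≤ q := one_lt_q Fq
  set d := μ.natDegree with hd
  have h1 : av Fq (zetaE Fq f ε (q - 1)) = (q : ℝ) ^ (-(((q - 1 : ℕ) : ℤ) * d)) :=
    av_zetaE Fq f hε0 μ hμ hmonic hmin (q - 1) (by omega)
  have hq4 : 4 ≤ q ^ 2 := by nlinarith
  have h2 : av Fq (zetaE Fq f ε (q ^ 2 - 1)) = (q : ℝ) ^ (-(((q ^ 2 - 1 : ℕ) : ℤ) * d)) :=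
    av_zetaE Fq f hε0 μ hμ hmonic hmin (q ^ 2 - 1) (by omega)
  have hζ1ne : zetaE Fq f ε (q - 1) ≠ 0 := by
    intro h
    rw [h, av_zero] at h1
    exact absurd h1.symm (zpow_pos (cardR_pos Fq) _).ne'
  have hfact : ((q ^ 2 - 1 : ℕ) : ℤ) = ((q - 1 : ℕ) : ℤ) * ((q : ℤ) + 1) := by
    have e1 : ((q ^ 2 - 1 : ℕ) : ℤ) = ((q : ℤ)) ^ 2 - 1 := by
      rw [Nat.cast_sub (by omega)]; push_cast; ring
    have e2 : ((q - 1 : ℕ) : ℤ) = (q : ℤ) - 1 := by omega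
    rw [e1, e2]; ring
  have hmain : av Fq (zetaE Fq f ε (q ^ 2 - 1)) = av Fq (zetaE Fq f ε (q - 1)) ^ (q + 1) := by
    rw [h1, h2, ← zpow_natCast ((q : ℝ) ^ (-(((q - 1 : ℕ) : ℤ) * d))) (q + 1), ← zpow_mul]
    congr 1
    rw [hfact]
    push_cast
    ring
  refine ⟨hζ1ne, hmain, ?_⟩
  rw [av_div, av_pow, hmain]
  exact div_self (pow_ne_zero _ (av_ne_zero Fq hζ1ne))

end QuantumJ
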